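/- arXiv:1203.0578 — 7 statements merged into one kernel-verified Lean document; each statement's English description precedes it below -/
import Mathlib

section
/- Let C be a nonempty closed convex set in R^d and let x_m be a point not in C. Then for all x in R^d, dist(x, C) ≤ ‖x_m - P_C(x_m)‖ + (‖x - P_C(x_m)‖² - ‖x_m - P_C(x_m)‖²) / (2‖x_m - P_C(x_m)‖), and equality holds at x = x_m. -/
open Metric

/-- Equivalent to `2 * r * t ≤ t ^ 2 + r ^ 2`. -/
theorem le_add_sq_sub_sq_div_two_mul {t r : ℝ} (hr : 0 < r) :
    t ≤ r + (t ^ 2 - r ^ 2) / (2 * r) := by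
  rw [← sub_le_iff_le_add', le_div_iff₀ (by positivity)]
  nlinarith [sq_nonneg (t - r)]

theorem infDist_le_add_sq_sub_sq_div_two_mul {α : Type*} [PseudoMetricSpace α] {s : Set α}
    {p : α} (hp : p ∈ s) {r : ℝ} (hr : 0 < r) (x : α) :
    infDist x s ≤ r + (dist x p ^ 2 - r ^ 2) / (2 * r) :=
  (infDist_le_dist_of_mem hp).trans (le_add_sq_sub_sq_div_two_mul hr)

theorem dist_quadratic_majorization_general
    {d : ℕ} (C : Set (EuclideanSpace ℝ (Fin d)))
    (hcl : IsClosed C)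
    (P : EuclideanSpace ℝ (Fin d) → EuclideanSpace ℝ (Fin d))
    (hP : ∀ z, P z ∈ C ∧ ‖z - P z‖ = infDist z C)
    (xm : EuclideanSpace ℝ (Fin d)) (hxm : xm ∉ C) :
    (∀ x, infDist x C ≤
      ‖xm - P xm‖ + (‖x - P xm‖ ^ 2 - ‖xm - P xm‖ ^ 2) / (2 * ‖xm - P xm‖)) ∧
    infDist xm C =
      ‖xm - P xm‖ + (‖xm - P xm‖ ^ 2 - ‖xm - P xm‖ ^ 2) / (2 * ‖xm - P xm‖) := by
  obtain ⟨hPC, hPdist⟩ := hP xm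
  have hr : 0 < ‖xm - P xm‖ := by
    rw [hPdist]
    exact (hcl.notMem_iff_infDist_pos ⟨_, hPC⟩).mp hxm
  refine ⟨fun x => ?_, ?_⟩
  · simpa only [dist_eq_norm] using infDist_le_add_sq_sub_sq_div_two_mul hPC hr x
  · rw [sub_self, zero_div, add_zero, hPdist]

theorem dist_quadratic_majorization
    {d : ℕ} (C : Set (EuclideanSpace ℝ (Fin d)))
    (hne : C.Nonempty) (hcl : IsClosed C) (hconv : Convex ℝ C)
    (P : EuclideanSpace ℝ (Fin d) → EuclideanSpace ℝ (Fin d))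
    (hP : ∀ z, P z ∈ C ∧ ‖z - P z‖ = infDist z C)
    (xm : EuclideanSpace ℝ (Fin d)) (hxm : xm ∉ C) :
    (∀ x, infDist x C ≤
      ‖xm - P xm‖ + (‖x - P xm‖ ^ 2 - ‖xm - P xm‖ ^ 2) / (2 * ‖xm - P xm‖)) ∧
    infDist xm C =
      ‖xm - P xm‖ + (‖xm - P xm‖ ^ 2 - ‖xm - P xm‖ ^ 2) / (2 * ‖xm - P xm‖) :=
  dist_quadratic_majorization_general C hcl P hP xm hxm
end

section
/- If C_1, ..., C_k are nonempty closed convex sets in R^d such that D(x) = Σ_j γ_j dist(x, C_j) (with positive weights γ_j) is strictly convex, then for every ε > 0 the function D_ε(x) = Σ_j γ_j √(dist(x, C_j)² + ε) is also strictly convex. -/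
open Metric

/-- `t ↦ √(t² + ε)` is convex on `ℝ`. -/
lemma gsqrt_convex {ε : ℝ} (hε : 0 < ε) :
    ConvexOn ℝ Set.univ (fun t : ℝ => Real.sqrt (t ^ 2 + ε)) := by
  refine ⟨convex_univ, ?_⟩
  intro x _ y _ a b ha hb hab
  simp only [smul_eq_mul]
  have hx : (0:ℝ) ≤ x ^ 2 + ε := by positivity
  have hy : (0:ℝ) ≤ y ^ 2 + ε := by positivity
  set s1 := Real.sqrt (x ^ 2 + ε) with hs1
  set s2 := Real.sqrt (y ^ 2 + ε) with hs2
  have hs1sq : s1 ^ 2 = x ^ 2 + ε := Real.sq_sqrt hx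
  have hs2sq : s2 ^ 2 = y ^ 2 + ε := Real.sq_sqrt hy
  have hs1n : 0 ≤ s1 := Real.sqrt_nonneg _
  have hs2n : 0 ≤ s2 := Real.sqrt_nonneg _
  have hkey : x * y + ε ≤ s1 * s2 := by
    have h1 : s1 * s2 = Real.sqrt ((x ^ 2 + ε) * (y ^ 2 + ε)) :=
      (Real.sqrt_mul hx _).symm
    have h2 : (x * y + ε) ^ 2 ≤ (x ^ 2 + ε) * (y ^ 2 + ε) := by nlinarith [sq_nonneg (x - y), hε.le]
    calc x * y + ε ≤ |x * y + ε| := le_abs_self _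
      _ = Real.sqrt ((x * y + ε) ^ 2) := (Real.sqrt_sq_eq_abs _).symm
      _ ≤ Real.sqrt ((x ^ 2 + ε) * (y ^ 2 + ε)) := Real.sqrt_le_sqrt h2
      _ = s1 * s2 := h1.symm
  have habn : 0 ≤ a * s1 + b * s2 := by positivity
  have hfinal : (a * x + b * y) ^ 2 + ε ≤ (a * s1 + b * s2) ^ 2 := by
    have h2ab : 2 * a * b * (x * y + ε) ≤ 2 * a * b * (s1 * s2) :=
      mul_le_mul_of_nonneg_left hkey (by positivity)
    have expand1 : (a * s1 + b * s2) ^ 2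
        = a ^ 2 * (x ^ 2 + ε) + 2 * a * b * (s1 * s2) + b ^ 2 * (y ^ 2 + ε) := by
      rw [← hs1sq, ← hs2sq]; ring
    have expand2 : (a * x + b * y) ^ 2 + ε
        = a ^ 2 * (x ^ 2 + ε) + 2 * a * b * (x * y + ε) + b ^ 2 * (y ^ 2 + ε) := by
      linear_combination (-(ε * (1 + a + b))) * hab
    linarith [expand1, expand2, h2ab]
  calc Real.sqrt ((a * x + b * y) ^ 2 + ε) ≤ Real.sqrt ((a * s1 + b * s2) ^ 2) :=
        Real.sqrt_le_sqrt hfinal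
    _ = a * s1 + b * s2 := Real.sqrt_sq habn

/-- distance to a nonempty closed convex set is convex. -/
lemma infDist_convexOn {d : ℕ} {C : Set (EuclideanSpace ℝ (Fin d))}
    (hne : C.Nonempty) (hcl : IsClosed C) (hconv : Convex ℝ C) :
    ConvexOn ℝ Set.univ (fun x => infDist x C) := by
  refine ⟨convex_univ, ?_⟩
  intro x _ y _ a b ha hb hab
  obtain ⟨cx, hcx, hdx⟩ := hcl.exists_infDist_eq_dist hne x
  obtain ⟨cy, hcy, hdy⟩ := hcl.exists_infDist_eq_dist hne y
  have hmem : a • cx + b • cy ∈ C := hconv hcx hcy ha hb hab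
  have h1 : infDist (a • x + b • y) C ≤ dist (a • x + b • y) (a • cx + b • cy) :=
    infDist_le_dist_of_mem hmem
  have h2 : dist (a • x + b • y) (a • cx + b • cy) ≤ a * dist x cx + b * dist y cy := by
    rw [dist_eq_norm]
    have heq : a • x + b • y - (a • cx + b • cy) = a • (x - cx) + b • (y - cy) := by
      module
    rw [heq]
    calc ‖a • (x - cx) + b • (y - cy)‖ ≤ ‖a • (x - cx)‖ + ‖b • (y - cy)‖ := norm_add_le _ _
      _ = a * ‖x - cx‖ + b * ‖y - cy‖ := by
          rw [norm_smul, norm_smul, Real.norm_of_nonneg ha, Real.norm_of_nonneg hb]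
      _ = a * dist x cx + b * dist y cy := by rw [dist_eq_norm, dist_eq_norm]
  simp only [smul_eq_mul]
  calc infDist (a • x + b • y) C ≤ a * dist x cx + b * dist y cy := h1.trans h2
    _ = a * infDist x C + b * infDist y C := by rw [hdx, hdy]

theorem Deps_strictConvex_of_D_strictConvex
    {d k : ℕ} (C : Fin k → Set (EuclideanSpace ℝ (Fin d)))
    (hne : ∀ j, (C j).Nonempty) (hcl : ∀ j, IsClosed (C j))
    (hconv : ∀ j, Convex ℝ (C j))
    (γ : Fin k → ℝ) (hγ : ∀ j, 0 < γ j)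
    (hD : StrictConvexOn ℝ Set.univ
      (fun x : EuclideanSpace ℝ (Fin d) => ∑ j, γ j * infDist x (C j)))
    (ε : ℝ) (hε : 0 < ε) :
    StrictConvexOn ℝ Set.univ
      (fun x : EuclideanSpace ℝ (Fin d) =>
        ∑ j, γ j * Real.sqrt ((infDist x (C j)) ^ 2 + ε)) := by
  refine ⟨convex_univ, ?_⟩
  intro x _ y _ hxy a b ha hb hab
  set z := a • x + b • y with hz
  -- abbreviations
  set dz := fun j => infDist z (C j) with hdz
  set dx := fun j => infDist x (C j) with hdx
  set dy := fun j => infDist y (C j) with hdy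
  have hdzn : ∀ j, 0 ≤ dz j := fun j => infDist_nonneg
  -- convexity of each distance
  have hconvd : ∀ j, dz j ≤ a * dx j + b * dy j := fun j => by
    have := (infDist_convexOn (hne j) (hcl j) (hconv j)).2 (Set.mem_univ x) (Set.mem_univ y)
      ha.le hb.le hab
    simpa using this
  have hcombo_n : ∀ j, 0 ≤ a * dx j + b * dy j := fun j =>
    add_nonneg (mul_nonneg ha.le infDist_nonneg) (mul_nonneg hb.le infDist_nonneg)
  -- strict inequality for the weighted sum of distances: extract a strict index
  have hDstrict := hD.2 (Set.mem_univ x) (Set.mem_univ y) hxy ha hb hab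
  simp only [smul_eq_mul] at hDstrict
  have hsum : ∑ j, γ j * dz j < ∑ j, γ j * (a * dx j + b * dy j) := by
    calc ∑ j, γ j * dz j < a * ∑ j, γ j * dx j + b * ∑ j, γ j * dy j := hDstrict
      _ = ∑ j, γ j * (a * dx j + b * dy j) := by
          rw [Finset.mul_sum, Finset.mul_sum, ← Finset.sum_add_distrib]
          exact Finset.sum_congr rfl fun j _ => by ring
  obtain ⟨j0, _, hj0⟩ := Finset.exists_lt_of_sum_lt hsum
  have hj0' : dz j0 < a * dx j0 + b * dy j0 := lt_of_mul_lt_mul_left (by linarith) (hγ j0).le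
  -- the smoothed function g
  set g := fun t : ℝ => Real.sqrt (t ^ 2 + ε) with hg
  have hgmono : ∀ {s t : ℝ}, 0 ≤ s → s ≤ t → g s ≤ g t := fun hs hst =>
    Real.sqrt_le_sqrt (by nlinarith)
  have hgstrict : ∀ {s t : ℝ}, 0 ≤ s → s < t → g s < g t := fun hs hst =>
    Real.sqrt_lt_sqrt (by positivity) (by nlinarith)
  have hgconv : ∀ j, g (a * dx j + b * dy j) ≤ a * g (dx j) + b * g (dy j) := fun j => by
    have := (gsqrt_convex hε).2 (Set.mem_univ (dx j)) (Set.mem_univ (dy j)) ha.le hb.le hab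
    simpa using this
  -- conclude
  have hle : ∀ j ∈ Finset.univ, γ j * g (dz j) ≤ γ j * (a * g (dx j) + b * g (dy j)) :=
    fun j _ => mul_le_mul_of_nonneg_left
      ((hgmono (hdzn j) (hconvd j)).trans (hgconv j)) (hγ j).le
  have hlt : γ j0 * g (dz j0) < γ j0 * (a * g (dx j0) + b * g (dy j0)) :=
    mul_lt_mul_of_pos_left
      (lt_of_lt_of_le (hgstrict (hdzn j0) hj0') (hgconv j0)) (hγ j0)
  have hfinal : ∑ j, γ j * g (dz j) < ∑ j, γ j * (a * g (dx j) + b * g (dy j)) :=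
    Finset.sum_lt_sum hle ⟨j0, Finset.mem_univ j0, hlt⟩
  simp only [smul_eq_mul]
  calc ∑ j, γ j * Real.sqrt (infDist z (C j) ^ 2 + ε)
      < ∑ j, γ j * (a * g (dx j) + b * g (dy j)) := hfinal
    _ = a * ∑ j, γ j * Real.sqrt (dx j ^ 2 + ε) + b * ∑ j, γ j * Real.sqrt (dy j ^ 2 + ε) := by
        rw [Finset.mul_sum, Finset.mul_sum, ← Finset.sum_add_distrib]
        exact Finset.sum_congr rfl fun j _ => by simp only [hg]; ring
end

section
/- Let C_1, ..., C_k be strictly convex, nonempty closed convex sets in R^d that are not collinear (no single line meets all of them). Then D(x) = Σ_j dist(x, C_j) is strictly convex. -/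
open Metric Topology

/-!
Each `infDist · C_j` is convex. Given `x ≠ y`, noncollinearity gives a `C_j` missing the whole
line through `x` and `y`; let `p`, `q` be nearest points of `C_j` to `x`, `y`. If `p ≠ q`, strict
convexity puts `a • p + b • q` in the interior of `C_j`, while `a • x + b • y` lies on the line,
hence outside `C_j`, so moving from `a • p + b • q` slightly towards it gives a strictly closer point
of `C_j`. If `p = q`, then `x - p` and `y - p` are not on a common ray (otherwise `p` would lie on
the line), so the triangle inequality for `a • (x - p) + b • (y - p)` is strict.
-/

theorem SameRay.exists_add_smul_sub_eq {R M : Type*} [Field R] [LinearOrder R]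
    [IsStrictOrderedRing R] [AddCommGroup M] [Module R M] {x y p : M}
    (h : SameRay R (x - p) (y - p)) (hxy : x ≠ y) : ∃ t : R, x + t • (y - x) = p := by
  by_cases hxp : x - p = 0
  · exact ⟨0, by rw [zero_smul, add_zero, ← sub_eq_zero, hxp]⟩
  obtain ⟨r, -, hr⟩ := h.exists_nonneg_left hxp
  have hr1 : 1 - r ≠ 0 := by
    rintro hr1
    rw [← eq_of_sub_eq_zero hr1, one_smul] at hr
    exact hxy (sub_left_injective hr)
  have hyx : y - x = (r - 1) • (x - p) := by rw [sub_smul, one_smul, hr]; abel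
  refine ⟨(1 - r)⁻¹, ?_⟩
  rw [hyx, smul_smul, show (1 - r)⁻¹ * (r - 1) = -1 by field_simp; ring]
  module

section NormedSpace

variable {E : Type*} [NormedAddCommGroup E] [NormedSpace ℝ E]

theorem infDist_lt_dist_of_mem_interior {s : Set E} {w z : E} (hw : w ∈ interior s)
    (hzw : z ≠ w) : infDist z s < dist z w := by
  have hlim : Filter.Tendsto (AffineMap.lineMap w z) (𝓝[>] (0 : ℝ)) (𝓝 w) := by
    simpa using (AffineMap.lineMap_continuous (p := w) (q := z)).continuousAt.tendsto.mono_left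
      (nhdsWithin_le_nhds (a := (0 : ℝ)))
  obtain ⟨c, hcs, hc⟩ := ((hlim.eventually (mem_interior_iff_mem_nhds.1 hw)).and
    (Ioo_mem_nhdsGT zero_lt_one)).exists
  calc infDist z s ≤ dist z (AffineMap.lineMap w z c) := infDist_le_dist_of_mem hcs
    _ = (1 - c) * dist z w := by
      rw [dist_comm, dist_lineMap_right, Real.norm_of_nonneg (by linarith [hc.2]), dist_comm]
    _ < dist z w := by nlinarith [dist_pos.2 hzw, hc.1]

theorem dist_smul_add_smul_le {x y x' y' : E} {a b : ℝ} (ha : 0 ≤ a) (hb : 0 ≤ b) :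
    dist (a • x + b • y) (a • x' + b • y') ≤ a * dist x x' + b * dist y y' :=
  (dist_add_add_le _ _ _ _).trans_eq <| by
    rw [dist_smul₀, dist_smul₀, Real.norm_of_nonneg ha, Real.norm_of_nonneg hb]

end NormedSpace

section StrictConvexSpace

variable {E : Type*} [NormedAddCommGroup E] [NormedSpace ℝ E] [StrictConvexSpace ℝ E]
  {s : Set E} {x y : E} {a b : ℝ}

theorem infDist_lt_of_strictConvex_of_forall_notMem {px py : E} (hs : StrictConvex ℝ s)
    (hpx : px ∈ s) (hpy : py ∈ s) (hxy : x ≠ y) (hline : ∀ t : ℝ, x + t • (y - x) ∉ s)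
    (ha : 0 < a) (hb : 0 < b) (hab : a + b = 1) :
    infDist (a • x + b • y) s < a * dist x px + b * dist y py := by
  have hz : a • x + b • y = x + b • (y - x) := by
    linear_combination (norm := module) hab • x
  rcases eq_or_ne px py with rfl | hp
  · have hray : ¬ SameRay ℝ (a • (x - px)) (b • (y - px)) := fun h => by
      have h' : SameRay ℝ (x - px) (y - px) := by
        simpa [inv_smul_smul₀, ha.ne', hb.ne'] using
          (h.pos_smul_left (inv_pos.2 ha)).pos_smul_right (inv_pos.2 hb)
      obtain ⟨t, ht⟩ := h'.exists_add_smul_sub_eq hxy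
      exact hline t (ht ▸ hpx)
    calc infDist (a • x + b • y) s ≤ dist (a • x + b • y) px := infDist_le_dist_of_mem hpx
      _ = ‖a • (x - px) + b • (y - px)‖ := by
        rw [dist_eq_norm]; congr 1; linear_combination (norm := module) hab • px
      _ < ‖a • (x - px)‖ + ‖b • (y - px)‖ := not_sameRay_iff_norm_add_lt.1 hray
      _ = a * dist x px + b * dist y px := by
        rw [norm_smul, norm_smul, Real.norm_of_nonneg ha.le, Real.norm_of_nonneg hb.le,
          dist_eq_norm, dist_eq_norm]
  · have hw : a • px + b • py ∈ interior s := hs hpx hpy hp ha hb hab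
    have hzw : a • x + b • y ≠ a • px + b • py := fun h =>
      hline b (hz ▸ h ▸ interior_subset hw)
    calc infDist (a • x + b • y) s < dist (a • x + b • y) (a • px + b • py) :=
          infDist_lt_dist_of_mem_interior hw hzw
      _ ≤ a * dist x px + b * dist y py := dist_smul_add_smul_le ha.le hb.le

end StrictConvexSpace

section ProperSpace

variable {E : Type*} [NormedAddCommGroup E] [NormedSpace ℝ E] [ProperSpace E]
  {s : Set E} {x y : E} {a b : ℝ}

theorem infDist_smul_add_smul_le (hs : Convex ℝ s) (hcl : IsClosed s) (hne : s.Nonempty)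
    (ha : 0 ≤ a) (hb : 0 ≤ b) (hab : a + b = 1) :
    infDist (a • x + b • y) s ≤ a * infDist x s + b * infDist y s := by
  obtain ⟨px, hpx, hdx⟩ := hcl.exists_infDist_eq_dist hne x
  obtain ⟨py, hpy, hdy⟩ := hcl.exists_infDist_eq_dist hne y
  rw [hdx, hdy]
  exact (infDist_le_dist_of_mem (hs hpx hpy ha hb hab)).trans (dist_smul_add_smul_le ha hb)

theorem infDist_smul_add_smul_lt [StrictConvexSpace ℝ E] (hs : StrictConvex ℝ s)
    (hcl : IsClosed s) (hne : s.Nonempty) (hxy : x ≠ y) (hline : ∀ t : ℝ, x + t • (y - x) ∉ s)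
    (ha : 0 < a) (hb : 0 < b) (hab : a + b = 1) :
    infDist (a • x + b • y) s < a * infDist x s + b * infDist y s := by
  obtain ⟨px, hpx, hdx⟩ := hcl.exists_infDist_eq_dist hne x
  obtain ⟨py, hpy, hdy⟩ := hcl.exists_infDist_eq_dist hne y
  rw [hdx, hdy]
  exact infDist_lt_of_strictConvex_of_forall_notMem hs hpx hpy hxy hline ha hb hab

end ProperSpace

theorem D_strictConvex_of_strictConvex_noncollinear
    {d k : ℕ} (C : Fin k → Set (EuclideanSpace ℝ (Fin d)))
    (hne : ∀ j, (C j).Nonempty) (hcl : ∀ j, IsClosed (C j))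
    (hsc : ∀ j, StrictConvex ℝ (C j))
    (hnoncol : ¬ ∃ (p v : EuclideanSpace ℝ (Fin d)), v ≠ 0 ∧
      ∀ j, ∃ t : ℝ, p + t • v ∈ C j) :
    StrictConvexOn ℝ Set.univ
      (fun x : EuclideanSpace ℝ (Fin d) => ∑ j, infDist x (C j)) := by
  refine ⟨convex_univ, fun x _ y _ hxy a b ha hb hab => ?_⟩
  obtain ⟨j₀, hj₀⟩ : ∃ j₀, ∀ t : ℝ, x + t • (y - x) ∉ C j₀ := by
    by_contra! h
    exact hnoncol ⟨x, y - x, sub_ne_zero.2 hxy.symm, h⟩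
  calc ∑ j, infDist (a • x + b • y) (C j)
      < ∑ j, (a * infDist x (C j) + b * infDist y (C j)) :=
        Finset.sum_lt_sum
          (fun j _ => infDist_smul_add_smul_le (hsc j).convex (hcl j) (hne j) ha.le hb.le hab)
          ⟨j₀, Finset.mem_univ _,
            infDist_smul_add_smul_lt (hsc j₀) (hcl j₀) (hne j₀) hxy hj₀ ha hb hab⟩
    _ = a • ∑ j, infDist x (C j) + b • ∑ j, infDist y (C j) := by
      simp only [smul_eq_mul, Finset.sum_add_distrib, Finset.mul_sum]
end

section
/- Let C be a nonempty closed convex set in R^d, let α ∈ (0, 1), and let x, y ∈ R^d. If dist(αx + (1-α)y, C) = α·dist(x, C) + (1-α)·dist(y, C) and P_C(x) ≠ P_C(y), then P_C(αx + (1-α)y) = αP_C(x) + (1-α)P_C(y). -/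
open Metric

lemma proj_unique_aux {E : Type*} [NormedAddCommGroup E] [InnerProductSpace ℝ E]
    {C : Set E} (hconv : Convex ℝ C) {z p₁ p₂ : E}
    (h₁ : p₁ ∈ C) (h₂ : p₂ ∈ C)
    (e₁ : ‖z - p₁‖ = infDist z C) (e₂ : ‖z - p₂‖ = infDist z C) : p₁ = p₂ := by
  set m : E := (1/2 : ℝ) • p₁ + (1/2 : ℝ) • p₂ with hm
  have hmC : m ∈ C := hconv h₁ h₂ (by norm_num) (by norm_num) (by norm_num)
  have hle : infDist z C ≤ ‖z - m‖ := by
    simpa [dist_eq_norm] using infDist_le_dist_of_mem hmC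
  have hpar := parallelogram_law_with_norm ℝ (z - p₁) (z - p₂)
  have h1 : (z - p₁) + (z - p₂) = (2 : ℝ) • (z - m) := by
    rw [hm]; module
  have h2 : (z - p₁) - (z - p₂) = p₂ - p₁ := by abel
  rw [h1, h2, norm_smul] at hpar
  have h2' : ‖(2:ℝ)‖ = 2 := by norm_num
  rw [h2'] at hpar
  have hnn : (0:ℝ) ≤ infDist z C := infDist_nonneg
  have hz0 : ‖p₂ - p₁‖ = 0 := by
    nlinarith [norm_nonneg (p₂ - p₁), norm_nonneg (z - m)]
  exact (sub_eq_zero.mp (norm_eq_zero.mp hz0)).symm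

theorem proj_of_affine_equality
    {d : ℕ} (C : Set (EuclideanSpace ℝ (Fin d)))
    (hne : C.Nonempty) (hcl : IsClosed C) (hconv : Convex ℝ C)
    (P : EuclideanSpace ℝ (Fin d) → EuclideanSpace ℝ (Fin d))
    (hP : ∀ z, P z ∈ C ∧ ‖z - P z‖ = infDist z C)
    (α : ℝ) (hα : α ∈ Set.Ioo (0 : ℝ) 1)
    (x y : EuclideanSpace ℝ (Fin d))
    (heq : infDist (α • x + (1 - α) • y) C =
      α * infDist x C + (1 - α) * infDist y C)
    (hPxy : P x ≠ P y) :
    P (α • x + (1 - α) • y) = α • P x + (1 - α) • P y := by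
  obtain ⟨hα0, hα1⟩ := hα
  set z := α • x + (1 - α) • y with hz
  set q := α • P x + (1 - α) • P y with hq
  have hqC : q ∈ C := hconv (hP x).1 (hP y).1 (le_of_lt hα0) (by linarith) (by ring)
  have hdiff : z - q = α • (x - P x) + (1 - α) • (y - P y) := by
    rw [hz, hq]; module
  have hub : ‖z - q‖ ≤ α * ‖x - P x‖ + (1 - α) * ‖y - P y‖ := by
    rw [hdiff]
    calc ‖α • (x - P x) + (1 - α) • (y - P y)‖
        ≤ ‖α • (x - P x)‖ + ‖(1 - α) • (y - P y)‖ := norm_add_le _ _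
      _ = α * ‖x - P x‖ + (1 - α) * ‖y - P y‖ := by
          rw [norm_smul, norm_smul, Real.norm_eq_abs, Real.norm_eq_abs,
            abs_of_pos hα0, abs_of_pos (by linarith : (0:ℝ) < 1 - α)]
  have hlb : infDist z C ≤ ‖z - q‖ := by
    simpa [dist_eq_norm] using infDist_le_dist_of_mem hqC
  have hq_eq : ‖z - q‖ = infDist z C := by
    have := (hP x).2
    have := (hP y).2
    apply le_antisymm _ hlb
    rw [heq, ← (hP x).2, ← (hP y).2]
    exact hub
  exact proj_unique_aux hconv (hP z).1 hqC (hP z).2 hq_eq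
end

section
/- For ε > 0 and a nonempty closed convex set C ⊆ R^d, the function x ↦ √(dist(x, C)² + ε) is differentiable everywhere on R^d with gradient (x - P_C(x)) / √(dist(x, C)² + ε); in particular its gradient vanishes at every point of C. -/
open Metric
open RealInnerProductSpace

/-!
Write `d = infDist · C`. Comparing `y` with the candidate `P x ∈ C` gives
`d y ^ 2 ≤ d x ^ 2 + 2 ⟪x - P x, y - x⟫ + ‖y - x‖ ^ 2`; the same comparison of `x` with `P y`,
combined with the monotonicity of `z ↦ z - P z` (a consequence of the variational inequality
characterising nearest points in a convex set), gives the matching lower bound with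
`- ‖y - x‖ ^ 2`. Hence `d ^ 2` has gradient `2 (x - P x)` everywhere, including on the boundary
of `C`, and since `d ^ 2 + ε > 0` the chain rule for `√` applies.
-/

section Gradient

variable {F : Type*} [NormedAddCommGroup F] [InnerProductSpace ℝ F] [CompleteSpace F]
  {f : F → ℝ} {g x : F}

theorem hasGradientAt_of_abs_sub_sub_inner_le_sq
    (h : ∀ v, |f (x + v) - f x - ⟪g, v⟫| ≤ ‖v‖ ^ 2) : HasGradientAt f g x := by
  rw [hasGradientAt_iff_isLittleO_nhds_zero]
  refine (Asymptotics.IsBigO.of_bound 1 (Filter.Eventually.of_forall fun v => ?_)).trans_isLittleO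
    (Asymptotics.isLittleO_norm_pow_id one_lt_two)
  simpa using h v

theorem HasGradientAt.add_const (hf : HasGradientAt f g x) (c : ℝ) :
    HasGradientAt (fun y => f y + c) g x :=
  (hasFDerivAt_add_const_iff c).2 hf

theorem HasGradientAt.sqrt (hf : HasGradientAt f g x) (hx : f x ≠ 0) :
    HasGradientAt (fun y => √(f y)) ((2 * √(f x))⁻¹ • g) x := by
  rw [hasGradientAt_iff_hasFDerivAt, map_smulₛₗ]
  simpa using HasFDerivAt.sqrt hf hx

end Gradient

section NearestPoint

variable {E : Type*} [NormedAddCommGroup E] [InnerProductSpace ℝ E] {C : Set E}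

theorem real_inner_sub_sub_nonpos_of_norm_eq_infDist (hC : Convex ℝ C) {z p w : E} (hp : p ∈ C)
    (hzp : ‖z - p‖ = infDist z C) (hw : w ∈ C) : ⟪z - p, w - p⟫ ≤ 0 := by
  refine (norm_eq_iInf_iff_real_inner_le_zero hC hp).1 ?_ w hw
  simp only [hzp, infDist_eq_iInf, dist_eq_norm]

theorem real_inner_sub_sub_nonneg_of_norm_eq_infDist (hC : Convex ℝ C) {x p y q : E}
    (hp : p ∈ C) (hxp : ‖x - p‖ = infDist x C) (hq : q ∈ C) (hyq : ‖y - q‖ = infDist y C) :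
    0 ≤ ⟪y - x, (y - q) - (x - p)⟫ := by
  have hx := real_inner_sub_sub_nonpos_of_norm_eq_infDist hC hp hxp hq
  have hy := real_inner_sub_sub_nonpos_of_norm_eq_infDist hC hq hyq hp
  have hy' : ⟪q - p, y - q⟫ = -⟪y - q, p - q⟫ := by
    rw [real_inner_comm, ← inner_neg_right, neg_sub]
  have hsplit : y - x = ((y - q) - (x - p)) + (q - p) := by abel
  rw [hsplit, inner_add_left, real_inner_self_eq_norm_sq, inner_sub_right, hy',
    real_inner_comm (x - p)]
  nlinarith [sq_nonneg ‖(y - q) - (x - p)‖]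

theorem infDist_sq_le_of_mem {x p : E} (hp : p ∈ C) (hxp : ‖x - p‖ = infDist x C) (y : E) :
    infDist y C ^ 2 ≤ infDist x C ^ 2 + 2 * ⟪x - p, y - x⟫ + ‖y - x‖ ^ 2 := by
  have hyp : infDist y C ≤ ‖(y - x) + (x - p)‖ := by
    rw [sub_add_sub_cancel, ← dist_eq_norm]
    exact infDist_le_dist_of_mem hp
  have hsq := pow_le_pow_left₀ infDist_nonneg hyp 2
  rw [norm_add_sq_real, hxp, real_inner_comm] at hsq
  linarith

theorem le_infDist_sq_of_mem (hC : Convex ℝ C) {x p y q : E}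
    (hp : p ∈ C) (hxp : ‖x - p‖ = infDist x C) (hq : q ∈ C) (hyq : ‖y - q‖ = infDist y C) :
    infDist x C ^ 2 + 2 * ⟪x - p, y - x⟫ - ‖y - x‖ ^ 2 ≤ infDist y C ^ 2 := by
  have hx := infDist_sq_le_of_mem hq hyq x
  have hmono := real_inner_sub_sub_nonneg_of_norm_eq_infDist hC hp hxp hq hyq
  have hxy : x - y = -(y - x) := by abel
  rw [hxy, inner_neg_right, norm_neg] at hx
  rw [inner_sub_right, real_inner_comm (y - q), real_inner_comm (x - p)] at hmono
  linarith

theorem hasGradientAt_infDist_sq [CompleteSpace E] (hC : Convex ℝ C) {P : E → E}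
    (hP : ∀ z, P z ∈ C ∧ ‖z - P z‖ = infDist z C) (x : E) :
    HasGradientAt (fun y => infDist y C ^ 2) ((2 : ℝ) • (x - P x)) x := by
  refine hasGradientAt_of_abs_sub_sub_inner_le_sq fun v => ?_
  have hlower := le_infDist_sq_of_mem hC (hP x).1 (hP x).2 (hP (x + v)).1 (hP (x + v)).2
  have hupper := infDist_sq_le_of_mem (hP x).1 (hP x).2 (x + v)
  rw [add_sub_cancel_left] at hlower hupper
  rw [real_inner_smul_left, abs_le]
  constructor <;> linarith

end NearestPoint

theorem sqrt_distsq_add_eps_hasGradientAt_general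
    {d : ℕ} (ε : ℝ) (hε : 0 < ε)
    (C : Set (EuclideanSpace ℝ (Fin d)))
    (hconv : Convex ℝ C)
    (P : EuclideanSpace ℝ (Fin d) → EuclideanSpace ℝ (Fin d))
    (hP : ∀ z, P z ∈ C ∧ ‖z - P z‖ = infDist z C) :
    (∀ x, HasGradientAt
      (fun y : EuclideanSpace ℝ (Fin d) => Real.sqrt ((infDist y C) ^ 2 + ε))
      ((Real.sqrt ((infDist x C) ^ 2 + ε))⁻¹ • (x - P x)) x) ∧
    (∀ x ∈ C,
      (Real.sqrt ((infDist x C) ^ 2 + ε))⁻¹ • (x - P x) = 0) := by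
  refine ⟨fun x => ?_, fun x hx => ?_⟩
  · have hpos : infDist x C ^ 2 + ε ≠ 0 := by positivity
    convert ((hasGradientAt_infDist_sq hconv hP x).add_const ε).sqrt hpos using 1
    rw [smul_smul]
    congr 1
    ring
  · have hxP : ‖x - P x‖ = 0 := (hP x).2.trans (infDist_zero_of_mem hx)
    rw [norm_eq_zero.1 hxP, smul_zero]

theorem sqrt_distsq_add_eps_hasGradientAt
    {d : ℕ} (ε : ℝ) (hε : 0 < ε)
    (C : Set (EuclideanSpace ℝ (Fin d)))
    (hne : C.Nonempty) (hcl : IsClosed C) (hconv : Convex ℝ C)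
    (P : EuclideanSpace ℝ (Fin d) → EuclideanSpace ℝ (Fin d))
    (hP : ∀ z, P z ∈ C ∧ ‖z - P z‖ = infDist z C) :
    (∀ x, HasGradientAt
      (fun y : EuclideanSpace ℝ (Fin d) => Real.sqrt ((infDist y C) ^ 2 + ε))
      ((Real.sqrt ((infDist x C) ^ 2 + ε))⁻¹ • (x - P x)) x) ∧
    (∀ x ∈ C,
      (Real.sqrt ((infDist x C) ^ 2 + ε))⁻¹ • (x - P x) = 0) :=
  sqrt_distsq_add_eps_hasGradientAt_general ε hε C hconv P hP
end

section
/- Let S, C_1, ..., C_k be nonempty closed convex subsets of R^d, ε > 0, γ_j > 0, and let g_ε(x | y) = (1/2) Σ_j γ_j ‖x - P_{C_j}(y)‖² / √(dist(y, C_j)² + ε) + c(y), where c(y) is chosen so that g_ε(y | y) = D_ε(y). Then g_ε majorizes D_ε: g_ε(x | y) ≥ D_ε(x) for all x, y, with equality at x = y. Consequently, the MM iterates x_{m+1} = argmin_{x ∈ S} g_ε(x | x_m) satisfy D_ε(x_{m+1}) ≤ D_ε(x_m). -/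
/-! Termwise, `dist(x, C_j) ≤ ‖x - P_{C_j}(y)‖` followed by the tangent-line bound for the
concave `√` at `dist(y, C_j)² + ε` gives `D_ε ≤ g_ε(· | y)`, with equality at `y`. Descent is the
MM sandwich `D_ε(x_{m+1}) ≤ g_ε(x_{m+1} | x_m) ≤ g_ε(x_m | x_m) = D_ε(x_m)`. -/

open Metric

theorem Real.sqrt_le_sqrt_add_sub_div {u m : ℝ} (hu : 0 ≤ u) (hm : 0 < m) :
    √u ≤ √m + (u - m) / (2 * √m) := by
  have hsm : 0 < √m := Real.sqrt_pos.mpr hm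
  rw [← sub_le_iff_le_add', le_div_iff₀ (by positivity)]
  nlinarith [sq_nonneg (√u - √m), Real.sq_sqrt hu, Real.sq_sqrt hm.le]

theorem sqrt_infDist_sq_add_le {E : Type*} [NormedAddCommGroup E] {s : Set E} {p x y : E}
    (hp : p ∈ s) (hyp : ‖y - p‖ = infDist y s) {ε : ℝ} (hε : 0 < ε) :
    √(infDist x s ^ 2 + ε) ≤
      √(infDist y s ^ 2 + ε) + (‖x - p‖ ^ 2 - ‖y - p‖ ^ 2) / (2 * √(infDist y s ^ 2 + ε)) := by
  have hxp : infDist x s ≤ ‖x - p‖ := dist_eq_norm x p ▸ infDist_le_dist_of_mem hp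
  calc √(infDist x s ^ 2 + ε) ≤ √(‖x - p‖ ^ 2 + ε) := by
        gcongr; exact infDist_nonneg
    _ ≤ √(‖y - p‖ ^ 2 + ε) + (‖x - p‖ ^ 2 + ε - (‖y - p‖ ^ 2 + ε)) / (2 * √(‖y - p‖ ^ 2 + ε)) :=
        Real.sqrt_le_sqrt_add_sub_div (by positivity) (by positivity)
    _ = _ := by rw [hyp, add_sub_add_right_eq_sub]

theorem le_of_majorize_of_le {α : Type*} {D : α → ℝ} {g : α → α → ℝ}
    (hmaj : ∀ x y, D x ≤ g x y) (htouch : ∀ y, g y y = D y) {x y : α} (h : g x y ≤ g y y) :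
    D x ≤ D y :=
  (hmaj x y).trans (h.trans (htouch y).le)

theorem MM_majorization_and_descent_general
    {d k : ℕ} (S : Set (EuclideanSpace ℝ (Fin d)))
    (C : Fin k → Set (EuclideanSpace ℝ (Fin d)))
    (γ : Fin k → ℝ) (hγ : ∀ j, 0 < γ j) (ε : ℝ) (hε : 0 < ε)
    (PC : Fin k → EuclideanSpace ℝ (Fin d) → EuclideanSpace ℝ (Fin d))
    (hPC : ∀ j z, PC j z ∈ C j ∧ ‖z - PC j z‖ = infDist z (C j))
    (Dε : EuclideanSpace ℝ (Fin d) → ℝ)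
    (hDε : ∀ x, Dε x = ∑ j, γ j * Real.sqrt ((infDist x (C j)) ^ 2 + ε))
    (g : EuclideanSpace ℝ (Fin d) → EuclideanSpace ℝ (Fin d) → ℝ)
    (hg : ∀ x y, g x y =
      (1 / 2) * ∑ j, γ j * ‖x - PC j y‖ ^ 2 / Real.sqrt ((infDist y (C j)) ^ 2 + ε)
      + (Dε y -
        (1 / 2) * ∑ j, γ j * ‖y - PC j y‖ ^ 2 / Real.sqrt ((infDist y (C j)) ^ 2 + ε))) :
    (∀ x y, Dε x ≤ g x y) ∧ (∀ y, g y y = Dε y) ∧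
    (∀ xs : ℕ → EuclideanSpace ℝ (Fin d), (∀ m, xs m ∈ S) →
      (∀ m, ∀ z ∈ S, g (xs (m + 1)) (xs m) ≤ g z (xs m)) →
      ∀ m, Dε (xs (m + 1)) ≤ Dε (xs m)) := by
  have hmaj : ∀ x y, Dε x ≤ g x y := by
    intro x y
    calc Dε x ≤ ∑ j, γ j * (√(infDist y (C j) ^ 2 + ε) + (‖x - PC j y‖ ^ 2 - ‖y - PC j y‖ ^ 2)
          / (2 * √(infDist y (C j) ^ 2 + ε))) := by
          rw [hDε]
          gcongr with j
          · exact (hγ j).le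
          · exact sqrt_infDist_sq_add_le (hPC j y).1 (hPC j y).2 hε
      _ = g x y := by
          simp only [hg, hDε y, Finset.mul_sum, ← Finset.sum_add_distrib, ← Finset.sum_sub_distrib]
          refine Finset.sum_congr rfl fun j _ => ?_
          ring
  have htouch : ∀ y, g y y = Dε y := fun y => by rw [hg]; ring
  exact ⟨hmaj, htouch, fun xs hmem hmin m =>
    le_of_majorize_of_le hmaj htouch (hmin m _ (hmem m))⟩

theorem MM_majorization_and_descent
    {d k : ℕ} (S : Set (EuclideanSpace ℝ (Fin d)))
    (hSne : S.Nonempty) (hScl : IsClosed S) (hSconv : Convex ℝ S)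
    (C : Fin k → Set (EuclideanSpace ℝ (Fin d)))
    (hne : ∀ j, (C j).Nonempty) (hcl : ∀ j, IsClosed (C j))
    (hconv : ∀ j, Convex ℝ (C j))
    (γ : Fin k → ℝ) (hγ : ∀ j, 0 < γ j) (ε : ℝ) (hε : 0 < ε)
    (PC : Fin k → EuclideanSpace ℝ (Fin d) → EuclideanSpace ℝ (Fin d))
    (hPC : ∀ j z, PC j z ∈ C j ∧ ‖z - PC j z‖ = infDist z (C j))
    (Dε : EuclideanSpace ℝ (Fin d) → ℝ)
    (hDε : ∀ x, Dε x = ∑ j, γ j * Real.sqrt ((infDist x (C j)) ^ 2 + ε))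
    (g : EuclideanSpace ℝ (Fin d) → EuclideanSpace ℝ (Fin d) → ℝ)
    (hg : ∀ x y, g x y =
      (1 / 2) * ∑ j, γ j * ‖x - PC j y‖ ^ 2 / Real.sqrt ((infDist y (C j)) ^ 2 + ε)
      + (Dε y -
        (1 / 2) * ∑ j, γ j * ‖y - PC j y‖ ^ 2 / Real.sqrt ((infDist y (C j)) ^ 2 + ε))) :
    (∀ x y, Dε x ≤ g x y) ∧ (∀ y, g y y = Dε y) ∧
    (∀ xs : ℕ → EuclideanSpace ℝ (Fin d), (∀ m, xs m ∈ S) →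
      (∀ m, ∀ z ∈ S, g (xs (m + 1)) (xs m) ≤ g z (xs m)) →
      ∀ m, Dε (xs (m + 1)) ≤ Dε (xs m)) :=
  MM_majorization_and_descent_general S C γ hγ ε hε PC hPC Dε hDε g hg
end

section
/- Let f be continuous on a set S ⊆ R^d and ψ : S → S a continuous map with f(ψ(x)) < f(x) whenever ψ(x) ≠ x. If for initial point x_0 the sublevel set {x ∈ S : f(x) ≤ f(x_0)} is compact, then the iterates x_{m+1} = ψ(x_m) satisfy: every cluster point of (x_m) is a fixed point of ψ, and ‖x_{m+1} - x_m‖ → 0. -/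
open Filter

set_option maxHeartbeats 1000000 in
theorem meyer_monotone_convergence
    {d : ℕ} (S : Set (EuclideanSpace ℝ (Fin d)))
    (f : EuclideanSpace ℝ (Fin d) → ℝ) (hf : ContinuousOn f S)
    (ψ : EuclideanSpace ℝ (Fin d) → EuclideanSpace ℝ (Fin d))
    (hψmap : Set.MapsTo ψ S S) (hψcont : ContinuousOn ψ S)
    (hdescent : ∀ x ∈ S, ψ x ≠ x → f (ψ x) < f x)
    (x0 : EuclideanSpace ℝ (Fin d)) (hx0 : x0 ∈ S)
    (hcompact : IsCompact {x ∈ S | f x ≤ f x0})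
    (xs : ℕ → EuclideanSpace ℝ (Fin d))
    (hxs0 : xs 0 = x0) (hxs : ∀ m, xs (m + 1) = ψ (xs m)) :
    (∀ y, MapClusterPt y atTop xs → ψ y = y) ∧
    Tendsto (fun m => ‖xs (m + 1) - xs m‖) atTop (nhds 0) := by
  set K := {x ∈ S | f x ≤ f x0} with hK
  -- all iterates lie in S
  have hmemS : ∀ m, xs m ∈ S := by
    intro m
    induction m with
    | zero => rw [hxs0]; exact hx0
    | succ n ih => rw [hxs]; exact hψmap ih
  -- f ∘ xs is antitone
  have hstep : ∀ m, f (xs (m + 1)) ≤ f (xs m) := by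
    intro m
    rw [hxs]
    by_cases h : ψ (xs m) = xs m
    · rw [h]
    · exact (hdescent _ (hmemS m) h).le
  have hanti : Antitone (fun m => f (xs m)) :=
    antitone_nat_of_succ_le hstep
  have hmemK : ∀ m, xs m ∈ K := by
    intro m
    refine ⟨hmemS m, ?_⟩
    have := hanti (Nat.zero_le m)
    simpa [hxs0] using this
  -- f ∘ xs converges to its infimum
  have hbdd : BddBelow (Set.range fun m => f (xs m)) := by
    obtain ⟨z, hz, hmin⟩ := hcompact.exists_isMinOn ⟨x0, hx0, le_refl _⟩
      (hf.mono (Set.sep_subset _ _))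
    refine ⟨f z, ?_⟩
    rintro _ ⟨m, rfl⟩
    exact hmin (hmemK m)
  set c : ℝ := ⨅ m, f (xs m) with hc
  have hconv : Tendsto (fun m => f (xs m)) atTop (nhds c) :=
    tendsto_atTop_ciInf hanti hbdd
  -- main fixed-point claim
  have hfix : ∀ y, MapClusterPt y atTop xs → ψ y = y := by
    intro y hy
    obtain ⟨φ, hφ, hφt⟩ := TopologicalSpace.FirstCountableTopology.tendsto_subseq hy
    have hyK : y ∈ K := hcompact.isClosed.mem_of_tendsto hφt
      (Eventually.of_forall fun k => hmemK (φ k))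
    have hyS : y ∈ S := hyK.1
    have hfy : Tendsto (fun k => f (xs (φ k))) atTop (nhds (f y)) := by
      refine ((hf y hyS).tendsto).comp ?_
      exact tendsto_nhdsWithin_of_tendsto_nhds_of_eventually_within _ hφt
        (Eventually.of_forall fun k => hmemS (φ k))
    have hfy' : Tendsto (fun k => f (xs (φ k))) atTop (nhds c) :=
      hconv.comp hφ.tendsto_atTop
    have hfyc : f y = c := tendsto_nhds_unique hfy hfy'
    have hψt : Tendsto (fun k => xs (φ k + 1)) atTop (nhds (ψ y)) := by
      simp only [hxs]
      refine ((hψcont y hyS).tendsto).comp ?_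
      exact tendsto_nhdsWithin_of_tendsto_nhds_of_eventually_within _ hφt
        (Eventually.of_forall fun k => hmemS (φ k))
    have hψS : ψ y ∈ S := hψmap hyS
    have hfψ : Tendsto (fun k => f (xs (φ k + 1))) atTop (nhds (f (ψ y))) := by
      refine ((hf _ hψS).tendsto).comp ?_
      exact tendsto_nhdsWithin_of_tendsto_nhds_of_eventually_within _ hψt
        (Eventually.of_forall fun k => hmemS (φ k + 1))
    have hfψ' : Tendsto (fun k => f (xs (φ k + 1))) atTop (nhds c) := by
      have : Tendsto (fun k => φ k + 1) atTop atTop :=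
        (tendsto_add_atTop_nat 1).comp hφ.tendsto_atTop
      exact hconv.comp this
    have hfψc : f (ψ y) = c := tendsto_nhds_unique hfψ hfψ'
    by_contra h
    exact absurd (hdescent y hyS h) (by rw [hfψc, hfyc]; exact lt_irrefl c)
  refine ⟨hfix, ?_⟩
  -- second part: by contradiction via subsequences
  rw [Metric.tendsto_atTop]
  by_contra h
  push_neg at h
  obtain ⟨ε, hε, h⟩ := h
  have hfreq : ∃ᶠ n in atTop, ε ≤ ‖xs (n + 1) - xs n‖ := by
    rw [frequently_atTop]
    intro N
    obtain ⟨n, hnN, hn⟩ := h N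
    refine ⟨n, hnN, ?_⟩
    rw [Real.dist_eq] at hn
    have := abs_abs (‖xs (n + 1) - xs n‖ - 0)
    calc ε ≤ |‖xs (n + 1) - xs n‖ - 0| := hn
    _ = ‖xs (n + 1) - xs n‖ := by rw [sub_zero, abs_norm]
  obtain ⟨φ, hφ, hφP⟩ := extraction_of_frequently_atTop hfreq
  obtain ⟨y, hyK, φ', hφ', hφ't⟩ := hcompact.tendsto_subseq (fun k => hmemK (φ k))
  have hcl : MapClusterPt y atTop xs := by
    have : Tendsto (xs ∘ (φ ∘ φ')) atTop (nhds y) := hφ't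
    exact MapClusterPt.of_comp ((hφ.comp hφ').tendsto_atTop) this.mapClusterPt
  have hψy : ψ y = y := hfix y hcl
  have hyS : y ∈ S := hyK.1
  have hψt : Tendsto (fun k => xs (φ (φ' k) + 1)) atTop (nhds y) := by
    have : Tendsto (fun k => ψ (xs (φ (φ' k)))) atTop (nhds (ψ y)) := by
      refine ((hψcont y hyS).tendsto).comp ?_
      exact tendsto_nhdsWithin_of_tendsto_nhds_of_eventually_within _ hφ't
        (Eventually.of_forall fun k => hmemS (φ (φ' k)))
    rw [hψy] at this
    simpa only [hxs] using this
  have hdiff : Tendsto (fun k => ‖xs (φ (φ' k) + 1) - xs (φ (φ' k))‖) atTop (nhds 0) := by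
    have := hψt.sub (hφ't : Tendsto (fun k => xs (φ (φ' k))) atTop (nhds y))
    rw [sub_self] at this
    simpa using this.norm
  have : ∀ k, ε ≤ ‖xs (φ (φ' k) + 1) - xs (φ (φ' k))‖ := fun k => hφP (φ' k)
  have hεle : ε ≤ 0 := le_of_tendsto_of_tendsto tendsto_const_nhds hdiff
    (Eventually.of_forall this)
  linarith
end
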